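/- arXiv:1501.04893 — 2 statements merged into one kernel-verified Lean document; each statement's English description precedes it below -/
import Mathlib

section
/- Let p be a prime, and k, d ≥ 1 integers, and let s_1,…,s_d ≥ 1. Then in ℚ_p: (p^k)^{s_1+⋯+s_d} · H_{p^k}(s_d,…,s_1) = ∑ over all tuples (v_i, q_i, r_i)_{i=1,…,d} with v_i ∈ {0,…,k−1}, q_i ≥ 0, r_i ∈ {1,…,p−1} satisfying 0 < p^{v_1}(pq_1+r_1) < ⋯ < p^{v_d}(pq_d+r_d) < p^k, of (∏_{i=1}^d (p^{k−v_i})^{s_i}) · ∑_{l_1,…,l_d ≥ 0} ∏_{i=1}^d (p·q_i)^{l_i} · binom(−s_i, l_i) · r_i^{−(s_i+l_i)}, the family being summable in ℚ_p. -/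
/-!
Every `0 < n < p ^ k` is uniquely `p ^ v * (p * q + r)` with `v < k` and `0 < r < p`, so
`(p ^ k) ^ s / n ^ s = (p ^ (k - v)) ^ s * (p * q + r) ^ (-s)`. Since `‖p * q‖ < 1 = ‖r‖` in
`ℚ_[p]`, `(p * q + r) ^ (-s)` is the negative binomial series in `p * q / r`. In the
nonarchimedean field `ℚ_[p]` a product of `d` such series is summable over `Fin d → ℕ` with the
expected sum, and the digit map `n ↦ (v, q, r)` is injective, so summing over all `(v, q, r, l)`
is the same as summing these products over the finitely many chains `n`.
-/

open Finset

/-- The generalized binomial coefficient `binom(−s,l) = (−1)^l · C(s+l−1, l) ∈ ℤ`. -/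
def negBinom (s l : ℕ) : ℤ := (-1) ^ l * (Nat.choose (s + l - 1) l : ℤ)

/-- The finite set of strictly increasing chains `0 < n_1 < ⋯ < n_d < N` of natural numbers. -/
def chainsN (d N : ℕ) : Finset (Fin d → ℕ) :=
  (Fintype.piFinset fun _ : Fin d => Finset.Ioo 0 N).filter
    (fun n => ∀ i j : Fin d, i < j → n i < n j)

section NegBinomSeries

variable {𝕜 : Type*} [NormedField 𝕜]

theorem hasSum_negBinom_mul_pow {s : ℕ} (hs : 1 ≤ s) {x : 𝕜} (hx : ‖x‖ < 1) :
    HasSum (fun l => (negBinom s l : 𝕜) * x ^ l) ((1 + x) ^ (-(s : ℤ))) := by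
  obtain ⟨k, rfl⟩ := Nat.exists_eq_add_of_le' hs
  have h := hasSum_choose_mul_geometric_of_norm_lt_one k (r := -x) (by rwa [norm_neg])
  rw [sub_neg_eq_add, one_div, ← zpow_natCast, ← zpow_neg] at h
  refine h.congr_fun fun l => ?_
  rw [negBinom, show k + 1 + l - 1 = l + k by omega, Nat.choose_symm_add, neg_pow]
  push_cast
  ring

theorem hasSum_pow_mul_negBinom_mul_zpow {s : ℕ} (hs : 1 ≤ s) {y r : 𝕜} (hyr : ‖y‖ < ‖r‖) :
    HasSum (fun l => y ^ l * (negBinom s l : 𝕜) * r ^ (-((s : ℤ) + l)))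
      ((y + r) ^ (-(s : ℤ))) := by
  have hr : r ≠ 0 := norm_pos_iff.1 ((norm_nonneg y).trans_lt hyr)
  have hx : ‖y / r‖ < 1 := by rwa [norm_div, div_lt_one (norm_pos_iff.2 hr)]
  have h := (hasSum_negBinom_mul_pow hs hx).mul_right (r ^ (-(s : ℤ)))
  rw [← mul_zpow, add_mul, one_mul, div_mul_cancel₀ y hr, add_comm] at h
  refine h.congr_fun fun l => ?_
  rw [zpow_neg, zpow_neg, zpow_add₀ hr, zpow_natCast, zpow_natCast, div_pow]
  field_simp

end NegBinomSeries

theorem HasSum.prod_fin_of_nonarchimedean {R β : Type*} [CommRing R] [UniformSpace R]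
    [IsUniformAddGroup R] [NonarchimedeanRing R] :
    ∀ {d : ℕ} {f : Fin d → β → R} {a : Fin d → R}, (∀ i, HasSum (f i) (a i)) →
      HasSum (fun l : Fin d → β => ∏ i, f i (l i)) (∏ i, a i)
  | 0, _, _, _ => by simp
  | d + 1, f, a, h => by
    have htail := HasSum.prod_fin_of_nonarchimedean fun i => h (Fin.succ i)
    rw [Fin.prod_univ_succ, ← (Fin.consEquiv fun _ => β).hasSum_iff]
    simpa [Function.comp_def, Fin.prod_univ_succ] using (h 0).mul_of_nonarchimedean htail

theorem hasSum_prod_of_fst_mem {α β M : Type*} [AddCommMonoid M] [TopologicalSpace M]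
    [ContinuousAdd M] {f : α × β → M} {g : α → M} (S : Finset α)
    (hf : ∀ x, x.1 ∉ S → f x = 0) (hg : ∀ a ∈ S, HasSum (fun b => f (a, b)) (g a)) :
    HasSum f (∑ a ∈ S, g a) := by
  classical
  have hsplit : f = fun x => ∑ a ∈ S, if a = x.1 then f x else 0 := by
    funext x
    rw [Finset.sum_ite_eq']
    split_ifs with hx
    · rfl
    · exact hf x hx
  rw [hsplit]
  refine hasSum_sum fun a ha => ?_
  rw [← (Prod.mk_right_injective a).hasSum_iff]
  · simpa [Function.comp_def] using hg a ha
  · rintro ⟨a', b⟩ hx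
    rw [if_neg]
    rintro rfl
    exact hx ⟨b, rfl⟩

namespace Nat

theorem pow_factorization_mul_ordCompl_div_add_mod (p n : ℕ) :
    p ^ n.factorization p * (p * (ordCompl[p] n / p) + ordCompl[p] n % p) = n := by
  rw [Nat.div_add_mod, Nat.ordProj_mul_ordCompl_eq_self]

variable {p n : ℕ}

theorem one_le_ordCompl_mod (hp : p.Prime) (hn : n ≠ 0) : 1 ≤ ordCompl[p] n % p :=
  Nat.pos_of_ne_zero fun h => Nat.not_dvd_ordCompl hp hn (Nat.dvd_of_mod_eq_zero h)

theorem factorization_lt_of_lt_pow (hp : p.Prime) {k : ℕ} (hn : n ≠ 0) (h : n < p ^ k) :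
    n.factorization p < k :=
  (Nat.pow_lt_pow_iff_right hp.one_lt).1 ((Nat.ordProj_le p hn).trans_lt h)

variable {v q r : ℕ}

theorem factorization_pow_mul_add (hp : p.Prime) (hr : 1 ≤ r) (hrp : r < p) :
    (p ^ v * (p * q + r)).factorization p = v := by
  have hndvd : ¬p ∣ p * q + r := fun h =>
    Nat.not_dvd_of_pos_of_lt hr hrp ((Nat.dvd_add_right (dvd_mul_right p q)).1 h)
  rw [Nat.factorization_mul (pow_ne_zero v hp.ne_zero) (by omega), Finsupp.add_apply,
    hp.factorization_pow, Finsupp.single_eq_same, Nat.factorization_eq_zero_of_not_dvd hndvd,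
    add_zero]

theorem ordCompl_pow_mul_add (hp : p.Prime) (hr : 1 ≤ r) (hrp : r < p) :
    ordCompl[p] (p ^ v * (p * q + r)) = p * q + r := by
  rw [factorization_pow_mul_add hp hr hrp, Nat.mul_div_cancel_left _ (pow_pos hp.pos v)]

theorem ordCompl_pow_mul_add_div (hp : p.Prime) (hr : 1 ≤ r) (hrp : r < p) :
    ordCompl[p] (p ^ v * (p * q + r)) / p = q := by
  rw [ordCompl_pow_mul_add hp hr hrp, Nat.mul_add_div hp.pos, Nat.div_eq_of_lt hrp, add_zero]

theorem ordCompl_pow_mul_add_mod (hp : p.Prime) (hr : 1 ≤ r) (hrp : r < p) :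
    ordCompl[p] (p ^ v * (p * q + r)) % p = r := by
  rw [ordCompl_pow_mul_add hp hr hrp, Nat.mul_add_mod, Nat.mod_eq_of_lt hrp]

end Nat

instance IsUltrametricDist.nonarchimedeanRing {R : Type*} [NormedRing R] [IsUltrametricDist R] :
    NonarchimedeanRing R where
  is_nonarchimedean := NonarchimedeanAddGroup.is_nonarchimedean

theorem mem_chainsN {d N : ℕ} {n : Fin d → ℕ} :
    n ∈ chainsN d N ↔ (∀ i, 0 < n i ∧ n i < N) ∧ ∀ i j : Fin d, i < j → n i < n j := by
  simp only [chainsN, Finset.mem_filter, Fintype.mem_piFinset, Finset.mem_Ioo]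

theorem pow_sub_pow_mul_zpow_neg {K : Type*} [Field K] {x : K} (hx : x ≠ 0) {v k : ℕ}
    (hvk : v ≤ k) (s : ℕ) (y : K) :
    (x ^ (k - v)) ^ s * y ^ (-(s : ℤ)) = (x ^ k) ^ s * (1 / (x ^ v * y) ^ s) := by
  rw [← pow_sub_mul_pow x hvk, zpow_neg, zpow_natCast, mul_comm (x ^ v) y, mul_pow, mul_pow,
    one_div, mul_inv, mul_mul_mul_comm, mul_inv_cancel₀ (pow_ne_zero _ (pow_ne_zero _ hx)), mul_one]

namespace Padic

variable {p : ℕ} [Fact p.Prime]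

theorem hasSum_natCast_add_zpow_neg {s q r : ℕ} (hs : 1 ≤ s) (hr : 1 ≤ r) (hrp : r < p) :
    HasSum (fun l => ((p * q : ℕ) : ℚ_[p]) ^ l * (negBinom s l : ℚ_[p]) *
      (r : ℚ_[p]) ^ (-((s : ℤ) + l))) (((p * q + r : ℕ) : ℚ_[p]) ^ (-(s : ℤ))) := by
  have hpq : ‖((p * q : ℕ) : ℚ_[p])‖ < 1 := norm_natCast_lt_one_iff.2 (dvd_mul_right p q)
  have hr1 : ‖(r : ℚ_[p])‖ = 1 :=
    norm_natCast_eq_one_iff.2 (Nat.coprime_of_lt_prime (by omega) hrp Fact.out)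
  simpa only [Nat.cast_add] using hasSum_pow_mul_negBinom_mul_zpow hs (hr1 ▸ hpq)

end Padic

section Expansion

variable (p : ℕ) {d : ℕ}

noncomputable def expansionTerm [Fact p.Prime] (k : ℕ) (s : Fin d → ℕ)
    (t : (Fin d → ℕ) × (Fin d → ℕ) × (Fin d → ℕ) × (Fin d → ℕ)) : ℚ_[p] :=
  if (∀ i, t.1 i ≤ k - 1) ∧ (∀ i, 1 ≤ t.2.2.1 i ∧ t.2.2.1 i ≤ p - 1) ∧
      (∀ i, 0 < p ^ (t.1 i) * (p * t.2.1 i + t.2.2.1 i)) ∧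
      (∀ i j : Fin d, i < j →
        p ^ (t.1 i) * (p * t.2.1 i + t.2.2.1 i) <
          p ^ (t.1 j) * (p * t.2.1 j + t.2.2.1 j)) ∧
      (∀ i, p ^ (t.1 i) * (p * t.2.1 i + t.2.2.1 i) < p ^ k) then
    (∏ i, ((p : ℚ_[p]) ^ (k - t.1 i)) ^ (s i)) *
      ∏ i, ((p * t.2.1 i : ℕ) : ℚ_[p]) ^ (t.2.2.2 i) *
        (negBinom (s i) (t.2.2.2 i) : ℚ_[p]) *
        ((t.2.2.1 i : ℚ_[p])) ^ (-((s i : ℤ) + (t.2.2.2 i : ℤ)))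
  else 0

-- The digits `(v, q, r)` of `n i = p ^ v i * (p * q i + r i)`, all three `0` when `n i = 0`.
def digitIndex (x : (Fin d → ℕ) × (Fin d → ℕ)) :
    (Fin d → ℕ) × (Fin d → ℕ) × (Fin d → ℕ) × (Fin d → ℕ) :=
  (fun i => (x.1 i).factorization p, fun i => ordCompl[p] (x.1 i) / p,
    fun i => ordCompl[p] (x.1 i) % p, x.2)

theorem digitIndex_injective : Function.Injective (digitIndex p (d := d)) :=
  Function.LeftInverse.injective
    (g := fun t => (fun i => p ^ t.1 i * (p * t.2.1 i + t.2.2.1 i), t.2.2.2)) fun x =>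
      Prod.ext (funext fun i => Nat.pow_factorization_mul_ordCompl_div_add_mod p (x.1 i)) rfl

variable [Fact p.Prime]

theorem mem_range_digitIndex_of_expansionTerm_ne_zero {k : ℕ} {s : Fin d → ℕ}
    {t : (Fin d → ℕ) × (Fin d → ℕ) × (Fin d → ℕ) × (Fin d → ℕ)}
    (ht : expansionTerm p k s t ≠ 0) : t ∈ Set.range (digitIndex p) := by
  obtain ⟨v, q, r, l⟩ := t
  have hp : p.Prime := Fact.out
  have hr : ∀ i, 1 ≤ r i ∧ r i < p := by
    by_contra h
    refine ht (if_neg fun hcond => h fun i => ?_)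
    have : 1 ≤ r i ∧ r i ≤ p - 1 := hcond.2.1 i
    have := hp.pos
    omega
  exact ⟨(fun i => p ^ v i * (p * q i + r i), l),
    Prod.ext (funext fun i => Nat.factorization_pow_mul_add hp (hr i).1 (hr i).2) <|
    Prod.ext (funext fun i => Nat.ordCompl_pow_mul_add_div hp (hr i).1 (hr i).2) <|
    Prod.ext (funext fun i => Nat.ordCompl_pow_mul_add_mod hp (hr i).1 (hr i).2) rfl⟩

theorem expansionTerm_digitIndex (k : ℕ) (s : Fin d → ℕ) (n l : Fin d → ℕ) :
    expansionTerm p k s (digitIndex p (n, l)) =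
      if n ∈ chainsN d (p ^ k) then
        (∏ i, ((p : ℚ_[p]) ^ (k - (n i).factorization p)) ^ (s i)) *
          ∏ i, ((p * (ordCompl[p] (n i) / p) : ℕ) : ℚ_[p]) ^ (l i) *
            (negBinom (s i) (l i) : ℚ_[p]) *
            ((ordCompl[p] (n i) % p : ℕ) : ℚ_[p]) ^ (-((s i : ℤ) + (l i : ℤ)))
      else 0 := by
  have hp : p.Prime := Fact.out
  simp only [expansionTerm, digitIndex, Nat.pow_factorization_mul_ordCompl_div_add_mod]
  refine if_congr ⟨fun h => mem_chainsN.2 ⟨fun i => ⟨h.2.2.1 i, h.2.2.2.2 i⟩, h.2.2.2.1⟩,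
    fun hn => ?_⟩ rfl rfl
  obtain ⟨hbound, hchain⟩ := mem_chainsN.1 hn
  refine ⟨fun i => ?_, fun i => ?_, fun i => (hbound i).1, hchain, fun i => (hbound i).2⟩
  · have := Nat.factorization_lt_of_lt_pow hp (hbound i).1.ne' (hbound i).2
    omega
  · have := Nat.one_le_ordCompl_mod hp (hbound i).1.ne'
    have := Nat.mod_lt (ordCompl[p] (n i)) hp.pos
    omega

end Expansion

theorem hasSum_expansionTerm (p : ℕ) [Fact p.Prime] (k : ℕ) {d : ℕ} {s : Fin d → ℕ}
    (hs : ∀ i, 1 ≤ s i) :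
    HasSum (expansionTerm p k s)
      (((p : ℚ_[p]) ^ k) ^ (∑ i, s i) * ∑ n ∈ chainsN d (p ^ k), ∏ i, 1 / (n i : ℚ_[p]) ^ s i) := by
  have hp : p.Prime := Fact.out
  rw [← (digitIndex_injective p).hasSum_iff fun t ht =>
    not_not.1 (mt (mem_range_digitIndex_of_expansionTerm_ne_zero p) ht), Finset.mul_sum]
  refine hasSum_prod_of_fst_mem _ (fun x hx => ?_) (fun n hn => ?_)
  · rw [Function.comp_apply, expansionTerm_digitIndex, if_neg hx]
  obtain ⟨hbound, -⟩ := mem_chainsN.1 hn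
  have hr i : 1 ≤ ordCompl[p] (n i) % p ∧ ordCompl[p] (n i) % p < p :=
    ⟨Nat.one_le_ordCompl_mod hp (hbound i).1.ne', Nat.mod_lt _ hp.pos⟩
  simp only [Function.comp_apply, expansionTerm_digitIndex, if_pos hn]
  have hvalue : ((p : ℚ_[p]) ^ k) ^ (∑ i, s i) * ∏ i, 1 / (n i : ℚ_[p]) ^ s i =
      (∏ i, ((p : ℚ_[p]) ^ (k - (n i).factorization p)) ^ s i) *
        ∏ i, ((p * (ordCompl[p] (n i) / p) + ordCompl[p] (n i) % p : ℕ) : ℚ_[p]) ^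
          (-(s i : ℤ)) := by
    rw [← Finset.prod_pow_eq_pow_sum, ← Finset.prod_mul_distrib, ← Finset.prod_mul_distrib]
    refine Finset.prod_congr rfl fun i _ => ?_
    have hv := Nat.factorization_lt_of_lt_pow hp (hbound i).1.ne' (hbound i).2
    rw [pow_sub_pow_mul_zpow_neg (Nat.cast_ne_zero.2 hp.ne_zero) hv.le,
      ← Nat.cast_pow p ((n i).factorization p), ← Nat.cast_mul,
      Nat.pow_factorization_mul_ordCompl_div_add_mod]
  rw [hvalue]
  exact (HasSum.prod_fin_of_nonarchimedean fun i =>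
    Padic.hasSum_natCast_add_zpow_neg (hs i) (hr i).1 (hr i).2).mul_left _

theorem mhs_prime_power_expansion_general (p : ℕ) [Fact p.Prime] (k d : ℕ)
    (s : Fin d → ℕ) (hs : ∀ i, 1 ≤ s i) :
    Summable (fun t : (Fin d → ℕ) × (Fin d → ℕ) × (Fin d → ℕ) × (Fin d → ℕ) =>
        if (∀ i, t.1 i ≤ k - 1) ∧ (∀ i, 1 ≤ t.2.2.1 i ∧ t.2.2.1 i ≤ p - 1) ∧
            (∀ i, 0 < p ^ (t.1 i) * (p * t.2.1 i + t.2.2.1 i)) ∧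
            (∀ i j : Fin d, i < j →
              p ^ (t.1 i) * (p * t.2.1 i + t.2.2.1 i) <
                p ^ (t.1 j) * (p * t.2.1 j + t.2.2.1 j)) ∧
            (∀ i, p ^ (t.1 i) * (p * t.2.1 i + t.2.2.1 i) < p ^ k) then
          (∏ i, ((p : ℚ_[p]) ^ (k - t.1 i)) ^ (s i)) *
            ∏ i, ((p * t.2.1 i : ℕ) : ℚ_[p]) ^ (t.2.2.2 i) *
              (negBinom (s i) (t.2.2.2 i) : ℚ_[p]) *
              ((t.2.2.1 i : ℚ_[p])) ^ (-((s i : ℤ) + (t.2.2.2 i : ℤ)))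
        else 0) ∧
    ((p : ℚ_[p]) ^ k) ^ (∑ i, s i) * (∑ n ∈ chainsN d (p ^ k), ∏ i, 1 / (n i : ℚ_[p]) ^ s i)
      = ∑' t : (Fin d → ℕ) × (Fin d → ℕ) × (Fin d → ℕ) × (Fin d → ℕ),
          if (∀ i, t.1 i ≤ k - 1) ∧ (∀ i, 1 ≤ t.2.2.1 i ∧ t.2.2.1 i ≤ p - 1) ∧
              (∀ i, 0 < p ^ (t.1 i) * (p * t.2.1 i + t.2.2.1 i)) ∧
              (∀ i j : Fin d, i < j →
                p ^ (t.1 i) * (p * t.2.1 i + t.2.2.1 i) <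
                  p ^ (t.1 j) * (p * t.2.1 j + t.2.2.1 j)) ∧
              (∀ i, p ^ (t.1 i) * (p * t.2.1 i + t.2.2.1 i) < p ^ k) then
            (∏ i, ((p : ℚ_[p]) ^ (k - t.1 i)) ^ (s i)) *
              ∏ i, ((p * t.2.1 i : ℕ) : ℚ_[p]) ^ (t.2.2.2 i) *
                (negBinom (s i) (t.2.2.2 i) : ℚ_[p]) *
                ((t.2.2.1 i : ℚ_[p])) ^ (-((s i : ℤ) + (t.2.2.2 i : ℤ)))
          else 0 :=
  have h := hasSum_expansionTerm p k hs
  ⟨h.summable, h.tsum_eq.symm⟩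

/-- `p`-adic expansion of `(p^k)^{s_1+⋯+s_d}·H_{p^k}(s_d,…,s_1)`: writing each index uniquely
as `n_i = p^{v_i}(pq_i+r_i)` with `v_i ∈ {0,…,k−1}`, `q_i ≥ 0` and `r_i ∈ {1,…,p−1}`,
`(p^k)^{s_1+⋯+s_d}·H_{p^k}(s_d,…,s_1) = ∑_{(v,q,r) chains} (∏_i (p^{k−v_i})^{s_i}) ·
∑_{l_1,…,l_d ≥ 0} ∏_i (pq_i)^{l_i}·binom(−s_i,l_i)·r_i^{−(s_i+l_i)}`, the whole family
(over all `(v,q,r,l)`, vanishing outside the chain condition) being summable in `ℚ_p`. -/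
theorem mhs_prime_power_expansion (p : ℕ) [Fact p.Prime] (k d : ℕ) (hk : 1 ≤ k) (hd : 1 ≤ d)
    (s : Fin d → ℕ) (hs : ∀ i, 1 ≤ s i) :
    Summable (fun t : (Fin d → ℕ) × (Fin d → ℕ) × (Fin d → ℕ) × (Fin d → ℕ) =>
        if (∀ i, t.1 i ≤ k - 1) ∧ (∀ i, 1 ≤ t.2.2.1 i ∧ t.2.2.1 i ≤ p - 1) ∧
            (∀ i, 0 < p ^ (t.1 i) * (p * t.2.1 i + t.2.2.1 i)) ∧
            (∀ i j : Fin d, i < j →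
              p ^ (t.1 i) * (p * t.2.1 i + t.2.2.1 i) <
                p ^ (t.1 j) * (p * t.2.1 j + t.2.2.1 j)) ∧
            (∀ i, p ^ (t.1 i) * (p * t.2.1 i + t.2.2.1 i) < p ^ k) then
          (∏ i, ((p : ℚ_[p]) ^ (k - t.1 i)) ^ (s i)) *
            ∏ i, ((p * t.2.1 i : ℕ) : ℚ_[p]) ^ (t.2.2.2 i) *
              (negBinom (s i) (t.2.2.2 i) : ℚ_[p]) *
              ((t.2.2.1 i : ℚ_[p])) ^ (-((s i : ℤ) + (t.2.2.2 i : ℤ)))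
        else 0) ∧
    ((p : ℚ_[p]) ^ k) ^ (∑ i, s i) * (∑ n ∈ chainsN d (p ^ k), ∏ i, 1 / (n i : ℚ_[p]) ^ s i)
      = ∑' t : (Fin d → ℕ) × (Fin d → ℕ) × (Fin d → ℕ) × (Fin d → ℕ),
          if (∀ i, t.1 i ≤ k - 1) ∧ (∀ i, 1 ≤ t.2.2.1 i ∧ t.2.2.1 i ≤ p - 1) ∧
              (∀ i, 0 < p ^ (t.1 i) * (p * t.2.1 i + t.2.2.1 i)) ∧
              (∀ i j : Fin d, i < j →
                p ^ (t.1 i) * (p * t.2.1 i + t.2.2.1 i) <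
                  p ^ (t.1 j) * (p * t.2.1 j + t.2.2.1 j)) ∧
              (∀ i, p ^ (t.1 i) * (p * t.2.1 i + t.2.2.1 i) < p ^ k) then
            (∏ i, ((p : ℚ_[p]) ^ (k - t.1 i)) ^ (s i)) *
              ∏ i, ((p * t.2.1 i : ℕ) : ℚ_[p]) ^ (t.2.2.2 i) *
                (negBinom (s i) (t.2.2.2 i) : ℚ_[p]) *
                ((t.2.2.1 i : ℚ_[p])) ^ (-((s i : ℤ) + (t.2.2.2 i : ℤ)))
          else 0 :=
  mhs_prime_power_expansion_general p k d s hs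
end

section
/- Let d ≥ 1 and l_1,…,l_d ≥ 1 be integers. Then for every integer N ≥ 0, one has in ℚ: ∑_{0 ≤ n_1 < n_2 < ⋯ < n_d < N} n_1^{l_1}·n_2^{l_2}⋯n_d^{l_d} = ∑ over all tuples (k_1,…,k_d) with 1 ≤ k_1 ≤ l_1+1, 1 ≤ k_2 ≤ k_1+l_2+1, …, 1 ≤ k_d ≤ k_{d−1}+l_d+1, of 𝔹_{k_1}^{l_1} · 𝔹_{k_2}^{k_1+l_2} · 𝔹_{k_3}^{k_2+l_3} ⋯ 𝔹_{k_d}^{k_{d−1}+l_d} · N^{k_d}. In particular the left-hand side is a polynomial function of N of degree at most l_1+⋯+l_d+d with zero constant coefficient. -/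
/-!
Peeling off the largest summation variable gives
`H_N(l_1,…,l_d) = ∑_{n<N} H_n(l_1,…,l_{d-1}) · n^{l_d}`.
The right-hand side obeys the same recursion: for fixed `k_1,…,k_{d-1}` the innermost sum
`∑_{k_d} 𝔹_{k_d}^{k_{d-1}+l_d} N^{k_d}` is `∑_{n<N} n^{k_{d-1}+l_d}` by Faulhaber's formula, and the
factor `n^{k_{d-1}}` recombines with the remaining coefficients into the right-hand side for
`(l_1,…,l_{d-1})` evaluated at `n`. With the convention `k_0 = 0` both sides are `1` for `d = 0`,
so induction on `d` concludes.
-/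

open Finset

/-- The Faulhaber coefficient `𝔹_u^l = (1/(l+1))·C(l+1,u)·B_{l+1−u} ∈ ℚ`, where `B_n` is the
`n`-th Bernoulli number in the convention `B_1 = −1/2`, so that
`∑_{n=0}^{N−1} n^l = ∑_{u=1}^{l+1} 𝔹_u^l·N^u`. -/
noncomputable def faulhaberB (u l : ℕ) : ℚ :=
  (1 / ((l : ℚ) + 1)) * (Nat.choose (l + 1) u : ℚ) * bernoulli (l + 1 - u)

namespace Fin

variable {α M : Type*} [AddCommMonoid M] {d : ℕ}

theorem sum_eq_sum_init_sum_last {s : Finset (Fin (d + 1) → α)} {s' : Finset (Fin d → α)}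
    {t : (Fin d → α) → Finset α} (h : ∀ K, K ∈ s ↔ init K ∈ s' ∧ K (last d) ∈ t (init K))
    (f : (Fin (d + 1) → α) → M) :
    ∑ K ∈ s, f K = ∑ K ∈ s', ∑ k ∈ t K, f (snoc K k) := by
  rw [← sum_finset_product_right' (s.map (snocEquiv _).symm.toEmbedding) s' t
    (by simp [h, snocEquiv])]
  simp

theorem sum_eq_sum_last_sum_init {s : Finset (Fin (d + 1) → α)} {t : Finset α}
    {s' : α → Finset (Fin d → α)} (h : ∀ K, K ∈ s ↔ K (last d) ∈ t ∧ init K ∈ s' (K (last d)))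
    (f : (Fin (d + 1) → α) → M) :
    ∑ K ∈ s, f K = ∑ k ∈ t, ∑ K ∈ s' k, f (snoc K k) := by
  rw [← sum_finset_product' (s.map (snocEquiv _).symm.toEmbedding) t s'
    (by simp [h, snocEquiv])]
  simp

theorem strictMono_snoc_iff [Preorder α] {f : Fin d → α} {x : α} :
    StrictMono (snoc (α := fun _ => α) f x) ↔ StrictMono f ∧ ∀ i, f i < x := by
  simp [← insertNth_last', strictMono_insertNth_iff, castSucc_lt_last]

end Fin

theorem sum_range_pow_eq_sum_faulhaberB (l N : ℕ) :
    ∑ n ∈ range N, (n : ℚ) ^ l = ∑ u ∈ Icc 1 (l + 1), faulhaberB u l * (N : ℚ) ^ u := by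
  rw [sum_range_pow]
  refine sum_nbij' (fun i => l + 1 - i) (fun u => l + 1 - u) ?_ ?_ ?_ ?_ ?_ <;>
    simp only [mem_range, mem_Icc]
  any_goals omega
  · intro i hi
    rw [faulhaberB, Nat.sub_sub_self (by omega), Nat.choose_symm (by omega)]
    ring

section

variable {d : ℕ}

def strictMonoTuples (d N : ℕ) : Finset (Fin d → ℕ) :=
  (Fintype.piFinset fun _ : Fin d => range N).filter (fun n => ∀ i j : Fin d, i < j → n i < n j)

theorem mem_strictMonoTuples {N : ℕ} {n : Fin d → ℕ} :
    n ∈ strictMonoTuples d N ↔ StrictMono n ∧ ∀ i, n i < N := by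
  simp only [strictMonoTuples, mem_filter, Fintype.mem_piFinset, mem_range]
  exact and_comm

theorem mem_strictMonoTuples_succ_iff {N : ℕ} {n : Fin (d + 1) → ℕ} :
    n ∈ strictMonoTuples (d + 1) N ↔
      n (Fin.last d) ∈ range N ∧ Fin.init n ∈ strictMonoTuples d (n (Fin.last d)) := by
  conv_lhs => rw [← Fin.snoc_init_self n]
  simp only [mem_strictMonoTuples, Fin.strictMono_snoc_iff, Fin.forall_fin_succ', Fin.snoc_castSucc,
    Fin.snoc_last, mem_range]
  grind

noncomputable def multiplePowerSum (l : Fin d → ℕ) (N : ℕ) : ℚ :=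
  ∑ n ∈ strictMonoTuples d N, ∏ i, (n i : ℚ) ^ l i

theorem multiplePowerSum_zero (l : Fin 0 → ℕ) (N : ℕ) : multiplePowerSum l N = 1 := by
  simp [multiplePowerSum, strictMonoTuples]

theorem multiplePowerSum_succ (l : Fin (d + 1) → ℕ) (N : ℕ) :
    multiplePowerSum l N =
      ∑ n ∈ range N, multiplePowerSum (Fin.init l) n * (n : ℚ) ^ l (Fin.last d) := by
  rw [multiplePowerSum, Fin.sum_eq_sum_last_sum_init fun _ => mem_strictMonoTuples_succ_iff]
  refine sum_congr rfl fun n _ => ?_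
  simp only [multiplePowerSum, sum_mul, Fin.prod_univ_castSucc, Fin.snoc_castSucc, Fin.snoc_last]
  rfl

def prevEntry (K : Fin d → ℕ) (j : Fin d) : ℕ :=
  if (j : ℕ) = 0 then 0 else K ⟨j - 1, (Nat.sub_le _ _).trans_lt j.isLt⟩

def lastEntry (K : Fin d → ℕ) : ℕ :=
  if h : d = 0 then 0 else K ⟨d - 1, by omega⟩

theorem prevEntry_castSucc (K : Fin (d + 1) → ℕ) (j : Fin d) :
    prevEntry K j.castSucc = prevEntry (Fin.init K) j :=
  rfl

theorem prevEntry_last (K : Fin (d + 1) → ℕ) :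
    prevEntry K (Fin.last d) = lastEntry (Fin.init K) := by
  simp only [prevEntry, lastEntry, Fin.val_last]
  split_ifs <;> rfl

theorem lastEntry_succ (K : Fin (d + 1) → ℕ) : lastEntry K = K (Fin.last d) :=
  dif_neg d.succ_ne_zero

theorem lastEntry_le {K : Fin d → ℕ} {B : ℕ} (h : ∀ j, K j ≤ B) : lastEntry K ≤ B := by
  unfold lastEntry
  split_ifs
  exacts [B.zero_le, h _]

def IsFaulhaberIndex (l K : Fin d → ℕ) : Prop :=
  ∀ j, K j ∈ Icc 1 (prevEntry K j + l j + 1)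

instance (l : Fin d → ℕ) : DecidablePred (IsFaulhaberIndex l) :=
  fun _ => Fintype.decidableForallFintype

theorem isFaulhaberIndex_succ_iff {l K : Fin (d + 1) → ℕ} :
    IsFaulhaberIndex l K ↔ IsFaulhaberIndex (Fin.init l) (Fin.init K) ∧
      K (Fin.last d) ∈ Icc 1 (lastEntry (Fin.init K) + l (Fin.last d) + 1) := by
  simp only [IsFaulhaberIndex, Fin.forall_fin_succ', prevEntry_castSucc, prevEntry_last]
  rfl

theorem IsFaulhaberIndex.le_sum_add {l K : Fin d → ℕ} (hK : IsFaulhaberIndex l K) (j : Fin d) :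
    K j ≤ ∑ i, l i + d := by
  induction d with
  | zero => exact j.elim0
  | succ d ih =>
    obtain ⟨hinit, hlast⟩ := isFaulhaberIndex_succ_iff.mp hK
    have hinit_le := ih hinit
    have hprev := lastEntry_le hinit_le
    rw [mem_Icc] at hlast
    rw [Fin.sum_univ_castSucc]
    induction j using Fin.lastCases with
    | last => simp only [Fin.init] at hprev; omega
    | cast j => have := hinit_le j; simp only [Fin.init] at this; omega

def faulhaberIndices (l : Fin d → ℕ) : Finset (Fin d → ℕ) :=
  (Fintype.piFinset fun _ : Fin d => Icc 1 (∑ i, l i + d)).filter (IsFaulhaberIndex l)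

theorem mem_faulhaberIndices {l K : Fin d → ℕ} :
    K ∈ faulhaberIndices l ↔ IsFaulhaberIndex l K := by
  simp only [faulhaberIndices, mem_filter, Fintype.mem_piFinset, mem_Icc, and_iff_right_iff_imp]
  exact fun hK j => ⟨(mem_Icc.mp (hK j)).1, hK.le_sum_add j⟩

noncomputable def faulhaberWeight (l K : Fin d → ℕ) : ℚ :=
  ∏ j, faulhaberB (K j) (prevEntry K j + l j)

theorem faulhaberWeight_succ (l K : Fin (d + 1) → ℕ) :
    faulhaberWeight l K = faulhaberWeight (Fin.init l) (Fin.init K) *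
      faulhaberB (K (Fin.last d)) (lastEntry (Fin.init K) + l (Fin.last d)) := by
  rw [faulhaberWeight, Fin.prod_univ_castSucc, prevEntry_last]
  rfl

noncomputable def faulhaberExpansion (l : Fin d → ℕ) (N : ℕ) : ℚ :=
  ∑ K ∈ faulhaberIndices l, faulhaberWeight l K * (N : ℚ) ^ lastEntry K

theorem faulhaberExpansion_zero (l : Fin 0 → ℕ) (N : ℕ) : faulhaberExpansion l N = 1 := by
  simp [faulhaberExpansion, faulhaberIndices, faulhaberWeight, lastEntry, IsFaulhaberIndex,
    filter_singleton]

theorem faulhaberExpansion_succ (l : Fin (d + 1) → ℕ) (N : ℕ) :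
    faulhaberExpansion l N =
      ∑ n ∈ range N, faulhaberExpansion (Fin.init l) n * (n : ℚ) ^ l (Fin.last d) := by
  calc faulhaberExpansion l N
      = ∑ K ∈ faulhaberIndices (Fin.init l), faulhaberWeight (Fin.init l) K *
          ∑ k ∈ Icc 1 (lastEntry K + l (Fin.last d) + 1),
            faulhaberB k (lastEntry K + l (Fin.last d)) * (N : ℚ) ^ k := by
        rw [faulhaberExpansion, Fin.sum_eq_sum_init_sum_last
          (s' := faulhaberIndices (Fin.init l))
          (t := fun K => Icc 1 (lastEntry K + l (Fin.last d) + 1))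
          fun K => by simp only [mem_faulhaberIndices, isFaulhaberIndex_succ_iff]]
        refine sum_congr rfl fun K _ => ?_
        simp only [mul_sum, faulhaberWeight_succ, lastEntry_succ, Fin.init_snoc, Fin.snoc_last,
          mul_assoc]
    _ = ∑ K ∈ faulhaberIndices (Fin.init l), faulhaberWeight (Fin.init l) K *
          ∑ n ∈ range N, (n : ℚ) ^ (lastEntry K + l (Fin.last d)) := by
        simp only [sum_range_pow_eq_sum_faulhaberB]
    _ = _ := by
        simp only [faulhaberExpansion, mul_sum, sum_mul, pow_add]
        rw [sum_comm]
        simp only [mul_assoc]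

theorem multiplePowerSum_eq_faulhaberExpansion (l : Fin d → ℕ) (N : ℕ) :
    multiplePowerSum l N = faulhaberExpansion l N := by
  induction d generalizing N with
  | zero => rw [multiplePowerSum_zero, faulhaberExpansion_zero]
  | succ d ih => simp only [multiplePowerSum_succ, faulhaberExpansion_succ, ih]

theorem isFaulhaberIndex_iff {l K : Fin d → ℕ} :
    IsFaulhaberIndex l K ↔ (∀ j : Fin d, 1 ≤ K j) ∧
      (∀ j : Fin d, (j : ℕ) = 0 → K j ≤ l j + 1) ∧
      (∀ j₁ j₂ : Fin d, (j₁ : ℕ) + 1 = (j₂ : ℕ) → K j₂ ≤ K j₁ + l j₂ + 1) := by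
  simp only [IsFaulhaberIndex, mem_Icc, forall_and]
  refine and_congr_right fun _ => ⟨fun h => ⟨fun j hj => ?_, fun j₁ j₂ hj => ?_⟩, ?_⟩
  · simpa [prevEntry, hj] using h j
  · have hprev : prevEntry K j₂ = K j₁ := by
      rw [prevEntry, if_neg (by omega)]
      exact congrArg K (Fin.ext (by simp only; omega))
    simpa [hprev] using h j₂
  · rintro ⟨h₀, hstep⟩ j
    unfold prevEntry
    split_ifs with hj
    · simpa using h₀ j hj
    · exact hstep _ j (by simp only; omega)

end

/-- Multiple Faulhaber formula: for `l_1,…,l_d ≥ 1` and any `N ≥ 0`,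
`∑_{0 ≤ n_1 < ⋯ < n_d < N} n_1^{l_1}⋯n_d^{l_d}
 = ∑_{(k_1,…,k_d), 1 ≤ k_1 ≤ l_1+1, 1 ≤ k_{j} ≤ k_{j−1}+l_j+1}
   𝔹_{k_1}^{l_1}·𝔹_{k_2}^{k_1+l_2}⋯𝔹_{k_d}^{k_{d−1}+l_d}·N^{k_d}`
(the tuples `k` automatically satisfy `k_j ≤ l_1+⋯+l_d+d`, so the right-hand index set is the
corresponding filtered finite set). -/
theorem multiple_faulhaber (d : ℕ) (hd : 1 ≤ d) (l : Fin d → ℕ) (N : ℕ) :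
    (∑ n ∈ (Fintype.piFinset fun _ : Fin d => Finset.range N).filter
        (fun n => ∀ i j : Fin d, i < j → n i < n j),
      ∏ i, (n i : ℚ) ^ (l i))
    = ∑ K ∈ (Fintype.piFinset fun _ : Fin d => Finset.Icc 1 (∑ i, l i + d)).filter
        (fun K => (∀ j : Fin d, 1 ≤ K j) ∧
          (∀ j : Fin d, (j : ℕ) = 0 → K j ≤ l j + 1) ∧
          (∀ j₁ j₂ : Fin d, (j₁ : ℕ) + 1 = (j₂ : ℕ) → K j₂ ≤ K j₁ + l j₂ + 1)),
      (∏ j : Fin d, faulhaberB (K j)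
          ((if (j : ℕ) = 0 then 0 else K ⟨(j : ℕ) - 1, by have := j.isLt; omega⟩) + l j)) *
        (N : ℚ) ^ (K ⟨d - 1, by omega⟩) := by
  refine (multiplePowerSum_eq_faulhaberExpansion l N).trans ?_
  rw [faulhaberExpansion, faulhaberIndices]
  refine sum_congr (filter_congr fun K _ => isFaulhaberIndex_iff) fun K _ => ?_
  have hlast : lastEntry K = K ⟨d - 1, by omega⟩ := dif_neg (by omega)
  rw [hlast]
  rfl
end
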